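/- Let α, β, γ ∈ 𝕋 be rationally independent, let Λ ≤ 𝕋³ be the subgroup generated by (α,1,α), (1,α,β), (1,1,γ), and let K₁ := 𝕋 × {1} × 𝕋 and K₂ := {1} × 𝕋 × 𝕋. Then ΛK₁ = 𝕋 × α^ℤ × 𝕋 and ΛK₂ = α^ℤ × 𝕋 × 𝕋, where α^ℤ = {α^n : n ∈ ℤ}. Consequently the continuous automorphism δ of 𝕋³ given by δ(x,y,z) = (y,x,z) satisfies δ(ΛK₁) = ΛK₂. -/

import Mathlib

/-- In a commutative group `K`, the subgroup `AB = {ab : a ∈ A, b ∈ B}`. -/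
def prodSubgroup {K : Type*} [CommGroup K] (A B : Subgroup K) : Subgroup K where
  carrier := {x | ∃ a ∈ A, ∃ b ∈ B, x = a * b}
  one_mem' := ⟨1, A.one_mem, 1, B.one_mem, (one_mul 1).symm⟩
  mul_mem' := by
    rintro x y ⟨a, ha, b, hb, rfl⟩ ⟨c, hc, d, hd, rfl⟩
    exact ⟨a * c, A.mul_mem ha hc, b * d, B.mul_mem hb hd, mul_mul_mul_comm a b c d⟩
  inv_mem' := by
    rintro x ⟨a, ha, b, hb, rfl⟩
    exact ⟨a⁻¹, A.inv_mem ha, b⁻¹, B.inv_mem hb, mul_inv a b⟩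

/-- The subgroup `𝕋 × {1} × 𝕋` of `𝕋³`. -/
noncomputable def KOne : Subgroup (Circle × Circle × Circle) :=
  (⊤ : Subgroup Circle).prod ((⊥ : Subgroup Circle).prod (⊤ : Subgroup Circle))

/-- The subgroup `{1} × 𝕋 × 𝕋` of `𝕋³`. -/
noncomputable def KTwo : Subgroup (Circle × Circle × Circle) :=
  (⊥ : Subgroup Circle).prod ((⊤ : Subgroup Circle).prod (⊤ : Subgroup Circle))

/-- The continuous automorphism `δ(x,y,z) = (y,x,z)` of `𝕋³`. -/
def swapAut : (Circle × Circle × Circle) ≃* (Circle × Circle × Circle) where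
  toFun p := (p.2.1, p.1, p.2.2)
  invFun p := (p.2.1, p.1, p.2.2)
  left_inv _ := rfl
  right_inv _ := rfl
  map_mul' _ _ := rfl

/-!
Every generator of `Λ`, hence every element, has first and second coordinate in `α^ℤ`, and
`α` itself occurs as such a coordinate of a generator. Since `K₁` is the kernel of the second
projection `π₂`, `ΛK₁ = π₂⁻¹(π₂ Λ) = π₂⁻¹(α^ℤ)`; likewise `ΛK₂ = π₁⁻¹(α^ℤ)`, and `δ`
exchanges `π₁` and `π₂`.
-/

theorem prodSubgroup_eq_sup {K : Type*} [CommGroup K] (A B : Subgroup K) :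
    prodSubgroup A B = A ⊔ B := by
  ext x
  rw [Subgroup.mem_sup]
  exact exists_congr fun _ => and_congr_right fun _ =>
    exists_congr fun _ => and_congr_right fun _ => eq_comm

theorem prodSubgroup_ker_eq_comap_map {G H : Type*} [CommGroup G] [Group H] (f : G →* H)
    (A : Subgroup G) : prodSubgroup A f.ker = (A.map f).comap f := by
  rw [prodSubgroup_eq_sup, Subgroup.comap_map_eq]

noncomputable abbrev projFst : Circle × Circle × Circle →* Circle := MonoidHom.fst _ _

noncomputable abbrev projSnd : Circle × Circle × Circle →* Circle :=
  (MonoidHom.fst _ _).comp (MonoidHom.snd _ _)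

theorem KOne_eq_ker_projSnd : KOne = projSnd.ker := by
  ext; simp [KOne, Subgroup.mem_prod]

theorem KTwo_eq_ker_projFst : KTwo = projFst.ker := by
  ext; simp [KTwo, Subgroup.mem_prod]

theorem prod_zpowers_eq_comap_projSnd (α : Circle) :
    (⊤ : Subgroup Circle).prod ((Subgroup.zpowers α).prod ⊤) =
      (Subgroup.zpowers α).comap projSnd := by
  ext; simp [Subgroup.mem_prod]

theorem prod_zpowers_eq_comap_projFst (α : Circle) :
    (Subgroup.zpowers α).prod ((⊤ : Subgroup Circle).prod ⊤) =
      (Subgroup.zpowers α).comap projFst := by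
  ext; simp [Subgroup.mem_prod]

theorem map_swapAut_comap_projSnd (S : Subgroup Circle) :
    (S.comap projSnd).map swapAut.toMonoidHom = S.comap projFst := by
  rw [Subgroup.map_equiv_eq_comap_symm', Subgroup.comap_comap]
  rfl

section Generators

variable (α β γ : Circle)

theorem map_projFst_closure :
    (Subgroup.closure {(α, 1, α), (1, α, β), (1, 1, γ)}).map projFst = Subgroup.zpowers α := by
  rw [MonoidHom.map_closure, Subgroup.zpowers_eq_closure, ← Subgroup.closure_insert_one {α}]
  congr 1
  ext
  simp [Set.image_insert_eq, or_comm]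

theorem map_projSnd_closure :
    (Subgroup.closure {(α, 1, α), (1, α, β), (1, 1, γ)}).map projSnd = Subgroup.zpowers α := by
  rw [MonoidHom.map_closure, Subgroup.zpowers_eq_closure, ← Subgroup.closure_insert_one {α}]
  congr 1
  ext
  simp [Set.image_insert_eq, or_comm]

end Generators

theorem prod_lambda_k_eq_and_swap_general
    (α β γ : Circle)
    (Λ : Subgroup (Circle × Circle × Circle))
    (hΛ : Λ = Subgroup.closure {(α, 1, α), (1, α, β), (1, 1, γ)}) :
    prodSubgroup Λ KOne =
      (⊤ : Subgroup Circle).prod ((Subgroup.zpowers α).prod (⊤ : Subgroup Circle)) ∧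
    prodSubgroup Λ KTwo =
      (Subgroup.zpowers α).prod ((⊤ : Subgroup Circle).prod (⊤ : Subgroup Circle)) ∧
    Subgroup.map swapAut.toMonoidHom (prodSubgroup Λ KOne) = prodSubgroup Λ KTwo := by
  have hK₁ : prodSubgroup Λ KOne = (Subgroup.zpowers α).comap projSnd := by
    rw [KOne_eq_ker_projSnd, prodSubgroup_ker_eq_comap_map, hΛ, map_projSnd_closure]
  have hK₂ : prodSubgroup Λ KTwo = (Subgroup.zpowers α).comap projFst := by
    rw [KTwo_eq_ker_projFst, prodSubgroup_ker_eq_comap_map, hΛ, map_projFst_closure]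
  rw [hK₁, hK₂, prod_zpowers_eq_comap_projSnd, prod_zpowers_eq_comap_projFst]
  exact ⟨rfl, rfl, map_swapAut_comap_projSnd _⟩

/-- Let `α, β, γ ∈ 𝕋` be rationally independent and `Λ ≤ 𝕋³` the subgroup
generated by `(α,1,α)`, `(1,α,β)`, `(1,1,γ)`.  Then `ΛK₁ = 𝕋 × α^ℤ × 𝕋` and
`ΛK₂ = α^ℤ × 𝕋 × 𝕋`; consequently the automorphism `δ(x,y,z) = (y,x,z)` of `𝕋³`
maps `ΛK₁` onto `ΛK₂`. -/
theorem prod_lambda_k_eq_and_swap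
    (α β γ : Circle)
    (hindep : ∀ a b c : ℤ, α ^ a * β ^ b * γ ^ c = 1 → a = 0 ∧ b = 0 ∧ c = 0)
    (Λ : Subgroup (Circle × Circle × Circle))
    (hΛ : Λ = Subgroup.closure {(α, 1, α), (1, α, β), (1, 1, γ)}) :
    prodSubgroup Λ KOne =
      (⊤ : Subgroup Circle).prod ((Subgroup.zpowers α).prod (⊤ : Subgroup Circle)) ∧
    prodSubgroup Λ KTwo =
      (Subgroup.zpowers α).prod ((⊤ : Subgroup Circle).prod (⊤ : Subgroup Circle)) ∧
    Subgroup.map swapAut.toMonoidHom (prodSubgroup Λ KOne) = prodSubgroup Λ KTwo :=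
  prod_lambda_k_eq_and_swap_general α β γ Λ hΛ
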